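/- Let n ≥ 1, 1 < p < ∞, α > 0. Let A be a bounded operator on F_α^p and let (z_γ) be a net in ℂⁿ such that A_{z_γ} := C̃_{z_γ} A C̃_{−z_γ} converges strongly to a bounded operator L on F_α^p and such that C̃_{z_γ} K C̃_{−z_γ} converges strongly to 0 for every compact operator K on F_α^p. Then ‖L‖ ≤ ‖A + K‖ for every compact operator K on F_α^p; in particular ‖L‖ is at most the essential norm inf{‖A + K‖ : K compact} of A. -/

import Mathlib

open MeasureTheory Complex Filter Metric

noncomputable section

set_option synthInstance.maxHeartbeats 1000000
set_option maxHeartbeats 1000000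

/-- ℂⁿ with its Euclidean (Hermitian) norm. -/
abbrev Cn (n : ℕ) := EuclideanSpace ℂ (Fin n)

instance (n : ℕ) : MeasurableSpace (Cn n) :=
  MeasurableSpace.comap (WithLp.ofLp : Cn n → (Fin n → ℂ)) MeasurableSpace.pi
instance (n : ℕ) : MeasureSpace (Cn n) :=
  ⟨(Measure.pi fun _ => (volume : Measure ℂ)).map (WithLp.toLp 2 : (Fin n → ℂ) → Cn n)⟩

/-- The standard Hermitian inner product ⟨z,w⟩ on ℂⁿ, linear in the first argument and
antilinear in the second. -/
def herm {n : ℕ} (z w : Cn n) : ℂ := inner ℂ w z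

/-- The Gaussian measure dμ_ν(z) = (ν/π)ⁿ e^{−ν|z|²} dz on ℂⁿ. -/
def gaussMeasure (n : ℕ) (ν : ℝ) : Measure (Cn n) :=
  volume.withDensity fun z => ENNReal.ofReal ((ν / Real.pi) ^ n * Real.exp (-ν * ‖z‖ ^ 2))

/-- L_α^p = L^p(ℂⁿ, μ_{pα/2}). -/
abbrev Lpa (n : ℕ) (p α : ℝ) := Lp ℂ (ENNReal.ofReal p) (gaussMeasure n (p * α / 2))

/-- The Fock space F_α^p : the subspace of L_α^p consisting of (classes of) entire functions. -/
def FockS (n : ℕ) (p α : ℝ) [Fact (1 ≤ ENNReal.ofReal p)] : Submodule ℂ (Lpa n p α) where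
  carrier := {f | ∃ g : Cn n → ℂ, Differentiable ℂ g ∧ ⇑f =ᵐ[gaussMeasure n (p * α / 2)] g}
  add_mem' := by
    rintro f₁ f₂ ⟨g₁, hg₁, he₁⟩ ⟨g₂, hg₂, he₂⟩
    exact ⟨g₁ + g₂, hg₁.add hg₂, (Lp.coeFn_add f₁ f₂).trans (he₁.add he₂)⟩
  zero_mem' := ⟨0, differentiable_const 0, Lp.coeFn_zero _ _ _⟩
  smul_mem' := by
    rintro c f ⟨g, hg, he⟩
    exact ⟨c • g, hg.const_smul c, (Lp.coeFn_smul c f).trans (he.const_smul c)⟩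

/-- `C` is the weighted shift operator C̃_z on the Fock space F_α^p :
(C̃_z f)(w) = f(w−z) e^{α⟨w,z⟩ − (α/2)|z|²}. -/
def IsShiftOpF (n : ℕ) (p α : ℝ) [Fact (1 ≤ ENNReal.ofReal p)] (z : Cn n)
    (C : ↥(FockS n p α) →L[ℂ] ↥(FockS n p α)) : Prop :=
  ∀ f : ↥(FockS n p α),
    ((C f : Lpa n p α) : Cn n → ℂ) =ᵐ[gaussMeasure n (p * α / 2)]
      fun w => Complex.exp ((α : ℂ) * herm w z - ((α / 2 * ‖z‖ ^ 2 : ℝ) : ℂ))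
        * (f : Lpa n p α) (w - z)

/-!
The weighted shifts `C̃_z` are isometries of `F_α^p`: with `ν = pα/2`, the `p`-th power of
`|e^{α⟨w,z⟩ − (α/2)|z|²}|` times the Gaussian density at `w` is the Gaussian density at `w − z`,
and Lebesgue measure is translation invariant. Hence `C̃_{z_γ} (A + K) C̃_{−z_γ} h`, which tends
to `L h`, has norm at most `‖A + K‖ ‖h‖` for every `γ`.
-/

instance (n : ℕ) : Measure.IsAddRightInvariant (volume : Measure (Cn n)) := by
  refine ⟨fun g => ?_⟩
  change Measure.map (· + g) ((Measure.pi fun _ => (volume : Measure ℂ)).map (WithLp.toLp 2)) = _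
  have hcomm : (· + g) ∘ (WithLp.toLp 2 : (Fin n → ℂ) → Cn n)
      = WithLp.toLp 2 ∘ (· + WithLp.ofLp g) := rfl
  rw [Measure.map_map (measurable_add_const g) (WithLp.measurable_toLp _ _), hcomm,
    ← Measure.map_map (WithLp.measurable_toLp _ _) (measurable_add_const _), map_add_right_eq_self]
  rfl

section ShiftWeight

variable {n : ℕ}

def shiftWeight (α : ℝ) (z w : Cn n) : ℂ :=
  Complex.exp ((α : ℂ) * herm w z - ((α / 2 * ‖z‖ ^ 2 : ℝ) : ℂ))

lemma norm_shiftWeight (α : ℝ) (z w : Cn n) :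
    ‖shiftWeight α z w‖ = Real.exp (α * (herm w z).re - α / 2 * ‖z‖ ^ 2) := by
  rw [shiftWeight, Complex.norm_exp, Complex.sub_re, Complex.ofReal_re, Complex.re_ofReal_mul]

-- Completing the square.
lemma gaussian_mul_norm_shiftWeight_rpow (p α : ℝ) (z w : Cn n) :
    Real.exp (-(p * α / 2) * ‖w‖ ^ 2) * ‖shiftWeight α z w‖ ^ p
      = Real.exp (-(p * α / 2) * ‖w - z‖ ^ 2) := by
  have hsq : ‖w - z‖ ^ 2 = ‖w‖ ^ 2 - 2 * (herm w z).re + ‖z‖ ^ 2 := by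
    simpa only [herm, inner_re_symm, RCLike.re_to_complex] using norm_sub_sq (𝕜 := ℂ) w z
  rw [norm_shiftWeight, ← Real.exp_mul, ← Real.exp_add, hsq]
  ring_nf

lemma lintegral_gaussMeasure (ν : ℝ) (F : Cn n → ENNReal) :
    ∫⁻ w, F w ∂gaussMeasure n ν
      = ∫⁻ w, ENNReal.ofReal ((ν / Real.pi) ^ n * Real.exp (-ν * ‖w‖ ^ 2)) * F w := by
  refine lintegral_withDensity_eq_lintegral_mul_non_measurable _ ?_
    (ae_of_all _ fun _ => ENNReal.ofReal_lt_top) F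
  exact (continuous_const.mul (Real.continuous_exp.comp (by fun_prop))).measurable.ennreal_ofReal

lemma lintegral_enorm_shiftWeight_mul_rpow {p : ℝ} (hp : 0 ≤ p) (α : ℝ) (z : Cn n)
    (F : Cn n → ℂ) :
    ∫⁻ w, ‖shiftWeight α z w * F (w - z)‖ₑ ^ p ∂gaussMeasure n (p * α / 2)
      = ∫⁻ w, ‖F w‖ₑ ^ p ∂gaussMeasure n (p * α / 2) := by
  rw [lintegral_gaussMeasure, lintegral_gaussMeasure]
  conv_rhs => rw [← lintegral_sub_right_eq_self _ z]
  refine lintegral_congr fun w => ?_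
  rw [enorm_mul, ENNReal.mul_rpow_of_nonneg _ _ hp, ← mul_assoc, ← ofReal_norm,
    ENNReal.ofReal_rpow_of_nonneg (norm_nonneg _) hp, ← ENNReal.ofReal_mul' (by positivity),
    mul_assoc, gaussian_mul_norm_shiftWeight_rpow]

end ShiftWeight

lemma IsShiftOpF.norm_apply {n : ℕ} {p α : ℝ} [hp : Fact (1 ≤ ENNReal.ofReal p)] {z : Cn n}
    {C : ↥(FockS n p α) →L[ℂ] ↥(FockS n p α)} (hC : IsShiftOpF n p α z C)
    (f : ↥(FockS n p α)) : ‖C f‖ = ‖f‖ := by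
  have hp0 : 0 ≤ p := zero_le_one.trans (ENNReal.one_le_ofReal.mp hp.out)
  have hp_ne_zero : ENNReal.ofReal p ≠ 0 := (zero_lt_one.trans_le hp.out).ne'
  change ‖(C f : Lpa n p α)‖ = ‖(f : Lpa n p α)‖
  rw [Lp.norm_def, Lp.norm_def, eLpNorm_congr_ae (hC f),
    eLpNorm_eq_lintegral_rpow_enorm_toReal hp_ne_zero ENNReal.ofReal_ne_top,
    eLpNorm_eq_lintegral_rpow_enorm_toReal hp_ne_zero ENNReal.ofReal_ne_top,
    ENNReal.toReal_ofReal hp0]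
  exact congrArg _ (congrArg (· ^ _) (lintegral_enorm_shiftWeight_mul_rpow hp0 α z _))

lemma ContinuousLinearMap.norm_le_of_tendsto_conj {𝕜 E F G H ι : Type*}
    [NontriviallyNormedField 𝕜] [NormedAddCommGroup E] [NormedAddCommGroup F]
    [NormedAddCommGroup G] [NormedAddCommGroup H] [NormedSpace 𝕜 E] [NormedSpace 𝕜 F]
    [NormedSpace 𝕜 G] [NormedSpace 𝕜 H] {l : Filter ι} [l.NeBot]
    {S : ι → E →L[𝕜] F} {T : ι → G →L[𝕜] H} (hS : ∀ γ x, ‖S γ x‖ ≤ ‖x‖)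
    (hT : ∀ γ x, ‖T γ x‖ ≤ ‖x‖) (B : F →L[𝕜] G) (L : E →L[𝕜] H)
    (hL : ∀ x, Tendsto (fun γ => T γ (B (S γ x))) l (nhds (L x))) : ‖L‖ ≤ ‖B‖ := by
  refine L.opNorm_le_bound (norm_nonneg B) fun x => le_of_tendsto' (hL x).norm fun γ => ?_
  calc ‖T γ (B (S γ x))‖ ≤ ‖B (S γ x)‖ := hT γ _
    _ ≤ ‖B‖ * ‖S γ x‖ := B.le_opNorm _
    _ ≤ ‖B‖ * ‖x‖ := by gcongr; exact hS γ x

theorem statement17_general (n : ℕ) (p α : ℝ)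
    [Fact (1 ≤ ENNReal.ofReal p)]
    {ι : Type*} [Nonempty ι] [SemilatticeSup ι] (z : ι → Cn n)
    (A : ↥(FockS n p α) →L[ℂ] ↥(FockS n p α))
    (CT CTm : ι → ↥(FockS n p α) →L[ℂ] ↥(FockS n p α))
    (hCT : ∀ γ, IsShiftOpF n p α (z γ) (CT γ))
    (hCTm : ∀ γ, IsShiftOpF n p α (-(z γ)) (CTm γ))
    (L : ↥(FockS n p α) →L[ℂ] ↥(FockS n p α))
    (hconv : ∀ h : ↥(FockS n p α),
      Tendsto (fun γ => ((CT γ).comp (A.comp (CTm γ))) h) atTop (nhds (L h)))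
    (hcpt : ∀ K : ↥(FockS n p α) →L[ℂ] ↥(FockS n p α), IsCompactOperator ⇑K →
      ∀ h : ↥(FockS n p α),
        Tendsto (fun γ => ((CT γ).comp (K.comp (CTm γ))) h) atTop (nhds 0)) :
    ∀ K : ↥(FockS n p α) →L[ℂ] ↥(FockS n p α), IsCompactOperator ⇑K → ‖L‖ ≤ ‖A + K‖ := by
  intro K hK
  refine ContinuousLinearMap.norm_le_of_tendsto_conj (l := atTop)
    (fun γ x => ((hCTm γ).norm_apply x).le) (fun γ x => ((hCT γ).norm_apply x).le) (A + K) L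
    fun h => ?_
  simpa using (hconv h).add (hcpt K hK h)

/-- If A_{z_γ} = C̃_{z_γ} A C̃_{−z_γ} → L strongly along a net (z_γ) and
C̃_{z_γ} K C̃_{−z_γ} → 0 strongly for every compact K, then ‖L‖ ≤ ‖A + K‖ for every compact
operator K; in particular ‖L‖ is at most the essential norm of A. -/
theorem statement17 (n : ℕ) (hn : 1 ≤ n) (p α : ℝ) (hp : 1 < p) (hα : 0 < α)
    [Fact (1 ≤ ENNReal.ofReal p)]
    {ι : Type*} [Nonempty ι] [SemilatticeSup ι] (z : ι → Cn n)
    (A : ↥(FockS n p α) →L[ℂ] ↥(FockS n p α))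
    (CT CTm : ι → ↥(FockS n p α) →L[ℂ] ↥(FockS n p α))
    (hCT : ∀ γ, IsShiftOpF n p α (z γ) (CT γ))
    (hCTm : ∀ γ, IsShiftOpF n p α (-(z γ)) (CTm γ))
    (L : ↥(FockS n p α) →L[ℂ] ↥(FockS n p α))
    (hconv : ∀ h : ↥(FockS n p α),
      Tendsto (fun γ => ((CT γ).comp (A.comp (CTm γ))) h) atTop (nhds (L h)))
    (hcpt : ∀ K : ↥(FockS n p α) →L[ℂ] ↥(FockS n p α), IsCompactOperator ⇑K →
      ∀ h : ↥(FockS n p α),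
        Tendsto (fun γ => ((CT γ).comp (K.comp (CTm γ))) h) atTop (nhds 0)) :
    ∀ K : ↥(FockS n p α) →L[ℂ] ↥(FockS n p α), IsCompactOperator ⇑K → ‖L‖ ≤ ‖A + K‖ :=
  statement17_general n p α z A CT CTm hCT hCTm L hconv hcpt
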